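/- Let f : I ⊂ [0,∞) → ℝ be n-times differentiable on I° with f^(n) ∈ L¹[a,b], a < b, and suppose |f^(n)|^q is s-convex on [a,b] for some s ∈ (0,1], q > 1, p = q/(q-1). Then |Σ_{m=1}^n (-1)^(n-m+2) ((b-a)^m/m!) [f^(m-1)(b) − (-1)^m f^(m-1)(a)] + 2(-1)^n ∫_a^b f(x) dx| ≤ ((b-a)^(n+1)/n!)(1/(n+1))^(1/p)[{B(s+1,n+1)|f^(n)(a)|^q + B(1,n+s+1)|f^(n)(b)|^q}^(1/q) + {B(s+1,n+1)|f^(n)(b)|^q + B(1,n+s+1)|f^(n)(a)|^q}^(1/q)]. -/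

import Mathlib

open MeasureTheory intervalIntegral Finset

def sConvexOn (s : ℝ) (A : Set ℝ) (g : ℝ → ℝ) : Prop :=
  ∀ x ∈ A, ∀ y ∈ A, ∀ t ∈ Set.Icc (0:ℝ) 1,
    g (t * x + (1 - t) * y) ≤ t ^ s * g x + (1 - t) ^ s * g y

noncomputable def betaF (x y : ℝ) : ℝ :=
  ∫ t in (0:ℝ)..1, t ^ (x - 1) * (1 - t) ^ (y - 1)

/-!
Integrating by parts `n` times from each endpoint turns `n!` times the left-hand side into
`∫ (x-a)^n f⁽ⁿ⁾ + (-1)^n ∫ (b-x)^n f⁽ⁿ⁾`. The weighted Hölder inequality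
`∫ w|g| ≤ (∫ w)^(1/p) (∫ w|g|^q)^(1/q)` bounds each integral, and s-convexity gives
`|f⁽ⁿ⁾(x)|^q ≤ (1-t)^s |f⁽ⁿ⁾(a)|^q + t^s |f⁽ⁿ⁾(b)|^q` with `t = (x-a)/(b-a)`; the substitution
`x = a + t(b-a)` turns the resulting integrals into Beta values. The reflection `x ↦ a+b-x`
reduces the second integral to the first.
-/

lemma betaF_comm (x y : ℝ) : betaF x y = betaF y x := by
  have h := intervalIntegral.integral_comp_sub_left (a := 0) (b := 1)
    (fun t : ℝ => t ^ (y - 1) * (1 - t) ^ (x - 1)) 1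
  simp only [sub_sub_cancel, sub_zero, sub_self] at h
  rw [betaF, betaF, ← h]
  simp only [mul_comm]

lemma betaF_nonneg (x y : ℝ) : 0 ≤ betaF x y :=
  intervalIntegral.integral_nonneg zero_le_one fun _ ht =>
    mul_nonneg (Real.rpow_nonneg ht.1 _) (Real.rpow_nonneg (sub_nonneg.2 ht.2) _)

lemma integral_pow_mul_one_sub_rpow (n : ℕ) (s : ℝ) :
    ∫ t in (0:ℝ)..1, t ^ n * (1 - t) ^ s = betaF (s + 1) (n + 1) := by
  rw [betaF_comm]
  simp only [betaF, add_sub_cancel_right, Real.rpow_natCast]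

lemma integral_pow_mul_rpow (n : ℕ) {s : ℝ} (hs : 0 < s) :
    ∫ t in (0:ℝ)..1, t ^ n * t ^ s = betaF 1 (n + s + 1) := by
  rw [betaF_comm, betaF]
  refine intervalIntegral.integral_congr fun t ht => ?_
  rw [Set.uIcc_of_le zero_le_one] at ht
  simp only [add_sub_cancel_right, sub_self, Real.rpow_zero, mul_one,
    Real.rpow_add' ht.1 (by positivity : (n:ℝ) + s ≠ 0), Real.rpow_natCast]

lemma integral_pow_mul_one_sub_rpow_add_rpow (n : ℕ) {s : ℝ} (hs : 0 < s) (A B : ℝ) :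
    ∫ t in (0:ℝ)..1, t ^ n * ((1 - t) ^ s * A + t ^ s * B)
      = betaF (s + 1) (n + 1) * A + betaF 1 (n + s + 1) * B := by
  have hcont : Continuous fun t : ℝ => t ^ s := Real.continuous_rpow_const hs.le
  simp only [mul_add, ← mul_assoc]
  rw [intervalIntegral.integral_add, intervalIntegral.integral_mul_const,
    intervalIntegral.integral_mul_const, integral_pow_mul_one_sub_rpow,
    integral_pow_mul_rpow n hs]
  all_goals exact (Continuous.intervalIntegrable (by fun_prop) _ _)

lemma integral_comp_sub_div_sub {a b : ℝ} (hab : a ≠ b) (φ : ℝ → ℝ) :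
    ∫ x in a..b, φ ((x - a) / (b - a)) = (b - a) * ∫ t in (0:ℝ)..1, φ t := by
  rw [intervalIntegral.integral_comp_sub_right (fun x => φ (x / (b - a))),
    intervalIntegral.integral_comp_div _ (sub_ne_zero.2 hab.symm)]
  simp [div_self (sub_ne_zero.2 hab.symm)]

lemma integral_sub_pow_mul_comp {a b : ℝ} (hab : a ≠ b) (n : ℕ) (φ : ℝ → ℝ) :
    ∫ x in a..b, (x - a) ^ n * φ ((x - a) / (b - a))
      = (b - a) ^ (n + 1) * ∫ t in (0:ℝ)..1, t ^ n * φ t := by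
  have hd : b - a ≠ 0 := sub_ne_zero.2 hab.symm
  have h : ∀ x, (x - a) ^ n * φ ((x - a) / (b - a))
      = (b - a) ^ n * (((x - a) / (b - a)) ^ n * φ ((x - a) / (b - a))) := fun x => by
    rw [div_pow, ← mul_assoc, mul_div_cancel₀ _ (pow_ne_zero n hd)]
  simp_rw [h]
  rw [intervalIntegral.integral_const_mul,
    integral_comp_sub_div_sub hab (fun t => t ^ n * φ t), pow_succ, mul_assoc]

lemma integral_sub_pow (a b : ℝ) (n : ℕ) :
    ∫ x in a..b, (x - a) ^ n = (b - a) ^ (n + 1) / (n + 1) := by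
  simp [intervalIntegral.integral_comp_sub_right (fun x => x ^ n), integral_pow]

lemma sConvexOn.le_of_mem_Icc {s a b : ℝ} {g : ℝ → ℝ} (h : sConvexOn s (Set.Icc a b) g)
    (hab : a < b) {x : ℝ} (hx : x ∈ Set.Icc a b) :
    g x ≤ (1 - (x - a) / (b - a)) ^ s * g a + ((x - a) / (b - a)) ^ s * g b := by
  have hd : 0 < b - a := sub_pos.2 hab
  have ht : (x - a) / (b - a) ∈ Set.Icc (0:ℝ) 1 :=
    ⟨div_nonneg (sub_nonneg.2 hx.1) hd.le, (div_le_one hd).2 (by linarith [hx.2])⟩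
  have h' := h a (Set.left_mem_Icc.2 hab.le) b (Set.right_mem_Icc.2 hab.le)
    (1 - (x - a) / (b - a)) ⟨by linarith [ht.2], by linarith [ht.1]⟩
  rwa [sub_sub_cancel, show (1 - (x - a) / (b - a)) * a + (x - a) / (b - a) * b = x by
    field_simp; ring] at h'

lemma sConvexOn.comp_reflect {s a b : ℝ} {g : ℝ → ℝ} (h : sConvexOn s (Set.Icc a b) g) :
    sConvexOn s (Set.Icc a b) (fun x => g (a + b - x)) := by
  intro x hx y hy t ht
  have hmem : ∀ z ∈ Set.Icc a b, a + b - z ∈ Set.Icc a b := fun z hz =>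
    ⟨by linarith [hz.2], by linarith [hz.1]⟩
  convert h _ (hmem x hx) _ (hmem y hy) t ht using 2
  ring

lemma memLp_ofReal_of_integrable_rpow {α : Type*} [MeasurableSpace α] {μ : Measure α}
    {r : ℝ} {f : α → ℝ} (hr : 0 < r) (hfm : AEStronglyMeasurable f μ) (hf0 : 0 ≤ᵐ[μ] f)
    (hfi : Integrable (fun x => f x ^ r) μ) : MemLp f (ENNReal.ofReal r) μ := by
  refine (integrable_norm_rpow_iff hfm (by simpa using hr) ENNReal.ofReal_ne_top).1 ?_
  rw [ENNReal.toReal_ofReal hr.le]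
  refine hfi.congr ?_
  filter_upwards [hf0] with x hx
  rw [Real.norm_of_nonneg hx]

lemma integral_mul_le_integral_mul_rpow {α : Type*} [MeasurableSpace α] {μ : Measure α}
    {p q : ℝ} (hpq : p.HolderConjugate q) {w g : α → ℝ} (hw : 0 ≤ᵐ[μ] w) (hg : 0 ≤ᵐ[μ] g)
    (hwi : Integrable w μ) (hgm : AEStronglyMeasurable g μ)
    (hwg : Integrable (fun x => w x * g x ^ q) μ) :
    ∫ x, w x * g x ∂μ ≤ (∫ x, w x ∂μ) ^ (1 / p) * (∫ x, w x * g x ^ q ∂μ) ^ (1 / q) := by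
  have hpq' : 1 / p + 1 / q = 1 := by rw [one_div, one_div, hpq.inv_add_inv_eq_one]
  -- Hölder's inequality applied to `w^(1/p)` and `w^(1/q) g`
  set u : α → ℝ := fun x => w x ^ (1 / p)
  set v : α → ℝ := fun x => w x ^ (1 / q) * g x
  have hu0 : 0 ≤ᵐ[μ] u := by filter_upwards [hw] with x hx using Real.rpow_nonneg hx _
  have hv0 : 0 ≤ᵐ[μ] v := by
    filter_upwards [hw, hg] with x hx hgx using mul_nonneg (Real.rpow_nonneg hx _) hgx
  have huv : (fun x => u x * v x) =ᵐ[μ] fun x => w x * g x := by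
    filter_upwards [hw] with x hx
    rw [← mul_assoc, ← Real.rpow_add' hx (by rw [hpq']; exact one_ne_zero), hpq', Real.rpow_one]
  have hup : (fun x => u x ^ p) =ᵐ[μ] w := by
    filter_upwards [hw] with x hx
    rw [← Real.rpow_mul hx, one_div_mul_cancel hpq.ne_zero, Real.rpow_one]
  have hvq : (fun x => v x ^ q) =ᵐ[μ] fun x => w x * g x ^ q := by
    filter_upwards [hw, hg] with x hx hgx
    rw [Real.mul_rpow (Real.rpow_nonneg hx _) hgx, ← Real.rpow_mul hx,
      one_div_mul_cancel hpq.symm.ne_zero, Real.rpow_one]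
  have hum : AEStronglyMeasurable u μ := (hwi.aemeasurable.pow_const _).aestronglyMeasurable
  have hvm : AEStronglyMeasurable v μ :=
    (hwi.aemeasurable.pow_const _).aestronglyMeasurable.mul hgm
  have := integral_mul_le_Lp_mul_Lq_of_nonneg hpq hu0 hv0
    (memLp_ofReal_of_integrable_rpow hpq.pos hum hu0 (hwi.congr hup.symm))
    (memLp_ofReal_of_integrable_rpow hpq.symm.pos hvm hv0 (hwg.congr hvq.symm))
  rwa [integral_congr_ae huv, integral_congr_ae hup, integral_congr_ae hvq] at this

lemma abs_integral_mul_le_of_rpow_le {a b p q : ℝ} (hab : a ≤ b) (hpq : p.HolderConjugate q)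
    {w F G : ℝ → ℝ} (hw : ContinuousOn w (Set.Icc a b)) (hw0 : ∀ x ∈ Set.Icc a b, 0 ≤ w x)
    (hF : IntervalIntegrable F volume a b) (hG : ContinuousOn G (Set.Icc a b))
    (hFG : ∀ x ∈ Set.Icc a b, |F x| ^ q ≤ G x) :
    |∫ x in a..b, w x * F x|
      ≤ (∫ x in a..b, w x) ^ (1 / p) * (∫ x in a..b, w x * G x) ^ (1 / q) := by
  simp only [intervalIntegral.integral_of_le hab]
  have hae : ∀ᵐ x ∂volume.restrict (Set.Ioc a b), x ∈ Set.Icc a b :=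
    (ae_restrict_mem measurableSet_Ioc).mono fun x hx => Set.Ioc_subset_Icc_self hx
  have hw0' : 0 ≤ᵐ[volume.restrict (Set.Ioc a b)] w := hae.mono hw0
  have hwi : IntegrableOn w (Set.Ioc a b) :=
    (hw.integrableOn_compact isCompact_Icc).mono_set Set.Ioc_subset_Icc_self
  have hwG : IntegrableOn (fun x => w x * G x) (Set.Ioc a b) :=
    ((hw.mul hG).integrableOn_compact isCompact_Icc).mono_set Set.Ioc_subset_Icc_self
  have hFm : AEStronglyMeasurable (fun x => |F x|) (volume.restrict (Set.Ioc a b)) :=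
    hF.1.aestronglyMeasurable.norm
  have hwFq : IntegrableOn (fun x => w x * |F x| ^ q) (Set.Ioc a b) := by
    refine hwG.mono' (hwi.aestronglyMeasurable.mul
      (hFm.aemeasurable.pow_const q).aestronglyMeasurable) ?_
    filter_upwards [hae] with x hx
    rw [Real.norm_of_nonneg (mul_nonneg (hw0 x hx) (Real.rpow_nonneg (abs_nonneg _) _))]
    exact mul_le_mul_of_nonneg_left (hFG x hx) (hw0 x hx)
  calc |∫ x in Set.Ioc a b, w x * F x|
      ≤ ∫ x in Set.Ioc a b, w x * |F x| := by
        refine MeasureTheory.abs_integral_le_integral_abs.trans_eq (integral_congr_ae ?_)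
        filter_upwards [hae] with x hx
        rw [abs_mul, abs_of_nonneg (hw0 x hx)]
    _ ≤ (∫ x in Set.Ioc a b, w x) ^ (1 / p) * (∫ x in Set.Ioc a b, w x * |F x| ^ q) ^ (1 / q) :=
        integral_mul_le_integral_mul_rpow hpq hw0' (ae_of_all _ fun _ => abs_nonneg _) hwi hFm hwFq
    _ ≤ (∫ x in Set.Ioc a b, w x) ^ (1 / p) * (∫ x in Set.Ioc a b, w x * G x) ^ (1 / q) := by
        refine mul_le_mul_of_nonneg_left (Real.rpow_le_rpow ?_ ?_ hpq.symm.one_div_nonneg)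
          (Real.rpow_nonneg (integral_nonneg_of_ae hw0') _)
        · exact integral_nonneg_of_ae (hw0'.mono fun x hx =>
            mul_nonneg hx (Real.rpow_nonneg (abs_nonneg _) _))
        · refine setIntegral_mono_on hwFq hwG measurableSet_Ioc fun x hx => ?_
          exact mul_le_mul_of_nonneg_left (hFG x (Set.Ioc_subset_Icc_self hx))
            (hw0 x (Set.Ioc_subset_Icc_self hx))

lemma Real.HolderConjugate.mul_rpow_mul_mul_rpow {p q D X Y : ℝ} (hpq : p.HolderConjugate q)
    (hD : 0 ≤ D) (hX : 0 ≤ X) (hY : 0 ≤ Y) :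
    (D * X) ^ (1 / p) * (D * Y) ^ (1 / q) = D * (X ^ (1 / p) * Y ^ (1 / q)) := by
  have h : 1 / p + 1 / q = 1 := by rw [one_div, one_div, hpq.inv_add_inv_eq_one]
  rw [Real.mul_rpow hD hX, Real.mul_rpow hD hY, mul_mul_mul_comm,
    ← Real.rpow_add' hD (by rw [h]; exact one_ne_zero), h, Real.rpow_one]

-- The sign `(-1)^(n+m)` avoids the truncated subtraction of the theorem's `(-1)^(n-m+2)`.
lemma integral_sub_pow_mul_iteratedDeriv {f : ℝ → ℝ} {a b : ℝ} (c : ℝ) :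
    ∀ n : ℕ, (∀ k < n, ∀ x ∈ Set.uIcc a b, DifferentiableAt ℝ (iteratedDeriv k f) x) →
    IntervalIntegrable (iteratedDeriv n f) volume a b →
    ∫ x in a..b, (x - c) ^ n * iteratedDeriv n f x
      = n.factorial * ((∑ m ∈ Finset.Icc 1 n, (-1:ℝ) ^ (n + m) *
          ((b - c) ^ m * iteratedDeriv (m - 1) f b - (a - c) ^ m * iteratedDeriv (m - 1) f a)
            / m.factorial) + (-1:ℝ) ^ n * ∫ x in a..b, f x) := by
  intro n
  induction n with
  | zero => intro _ _; simp
  | succ n ih =>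
    intro hdiff hint
    have hdn : ∀ x ∈ Set.uIcc a b, DifferentiableAt ℝ (iteratedDeriv n f) x :=
      hdiff n n.lt_succ_self
    have hintn : IntervalIntegrable (iteratedDeriv n f) volume a b :=
      ContinuousOn.intervalIntegrable fun x hx => (hdn x hx).continuousAt.continuousWithinAt
    have ibp := intervalIntegral.integral_mul_deriv_eq_deriv_mul
      (u := fun x => (x - c) ^ (n + 1)) (u' := fun x => (n + 1 : ℝ) * (x - c) ^ n)
      (v := iteratedDeriv n f) (v' := iteratedDeriv (n + 1) f)
      (fun x _ => by simpa using ((hasDerivAt_id x).sub_const c).fun_pow (n + 1))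
      (fun x hx => by rw [iteratedDeriv_succ]; exact (hdn x hx).hasDerivAt)
      (Continuous.intervalIntegrable (by fun_prop) _ _) hint
    have hsign : ∀ m : ℕ, (-1:ℝ) ^ (n + 1 + m) = -(-1) ^ (n + m) := fun m => by
      rw [add_right_comm, pow_succ, mul_neg_one]
    simp only [mul_assoc, intervalIntegral.integral_const_mul] at ibp
    rw [ibp, ih (fun k hk => hdiff k (hk.trans n.lt_succ_self)) hintn,
      Finset.sum_Icc_succ_top (by omega : 1 ≤ n + 1), Nat.factorial_succ,
      Even.neg_one_pow ⟨n + 1, rfl⟩]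
    simp only [hsign, neg_mul, neg_div, Finset.sum_neg_distrib, Nat.add_sub_cancel]
    push_cast
    field_simp
    ring

lemma factorial_mul_sum_add_integral_eq {f : ℝ → ℝ} {a b : ℝ} (n : ℕ)
    (hdiff : ∀ k < n, ∀ x ∈ Set.uIcc a b, DifferentiableAt ℝ (iteratedDeriv k f) x)
    (hint : IntervalIntegrable (iteratedDeriv n f) volume a b) :
    n.factorial * ((∑ m ∈ Finset.Icc 1 n, (-1:ℝ) ^ (n - m + 2) * ((b - a) ^ m / m.factorial) *
        (iteratedDeriv (m - 1) f b - (-1:ℝ) ^ m * iteratedDeriv (m - 1) f a))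
      + 2 * (-1:ℝ) ^ n * ∫ x in a..b, f x)
    = (∫ x in a..b, (x - a) ^ n * iteratedDeriv n f x)
      + (-1:ℝ) ^ n * ∫ x in a..b, (b - x) ^ n * iteratedDeriv n f x := by
  have hreflect : (-1:ℝ) ^ n * ∫ x in a..b, (b - x) ^ n * iteratedDeriv n f x
      = ∫ x in a..b, (x - b) ^ n * iteratedDeriv n f x := by
    rw [← intervalIntegral.integral_const_mul]
    simp only [← mul_assoc, ← mul_pow, neg_one_mul, neg_sub]
  have hsum : ∀ m ∈ Finset.Icc 1 n,
      (-1:ℝ) ^ (n - m + 2) * ((b - a) ^ m / m.factorial) *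
        (iteratedDeriv (m - 1) f b - (-1:ℝ) ^ m * iteratedDeriv (m - 1) f a)
      = (-1:ℝ) ^ (n + m) * ((b - a) ^ m * iteratedDeriv (m - 1) f b
          - (a - a) ^ m * iteratedDeriv (m - 1) f a) / m.factorial
        + (-1:ℝ) ^ (n + m) * ((b - b) ^ m * iteratedDeriv (m - 1) f b
          - (a - b) ^ m * iteratedDeriv (m - 1) f a) / m.factorial := fun m hm => by
    obtain ⟨hm1, hmn⟩ := Finset.mem_Icc.1 hm
    rw [show n + m = n - m + 2 + 2 * (m - 1) by omega, pow_add _ _ (2 * (m - 1)), pow_mul,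
      neg_one_sq, one_pow, mul_one, sub_self, sub_self, zero_pow (by omega), ← neg_sub b a,
      neg_pow (b - a)]
    ring
  rw [hreflect, integral_sub_pow_mul_iteratedDeriv a n hdiff hint,
    integral_sub_pow_mul_iteratedDeriv b n hdiff hint, Finset.sum_congr rfl hsum,
    Finset.sum_add_distrib]
  ring

lemma abs_integral_sub_pow_mul_le {F : ℝ → ℝ} {a b s p q : ℝ} (hab : a < b) (n : ℕ) (hs : 0 < s)
    (hpq : p.HolderConjugate q) (hF : IntervalIntegrable F volume a b)
    (hsc : sConvexOn s (Set.Icc a b) fun x => |F x| ^ q) :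
    |∫ x in a..b, (x - a) ^ n * F x| ≤ (b - a) ^ (n + 1) * (1 / (n + 1)) ^ (1 / p) *
      (betaF (s + 1) (n + 1) * |F a| ^ q + betaF 1 (n + s + 1) * |F b| ^ q) ^ (1 / q) := by
  set A := |F a| ^ q
  set B := |F b| ^ q
  have hcont : Continuous fun t : ℝ => t ^ s := Real.continuous_rpow_const hs.le
  have h := abs_integral_mul_le_of_rpow_le hab.le hpq (w := fun x => (x - a) ^ n)
    (G := fun x => (1 - (x - a) / (b - a)) ^ s * A + ((x - a) / (b - a)) ^ s * B)
    (by fun_prop) (fun x hx => pow_nonneg (sub_nonneg.2 hx.1) n) hF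
    (Continuous.continuousOn (by fun_prop)) (fun x hx => hsc.le_of_mem_Icc hab hx)
  have hG := integral_sub_pow_mul_comp hab.ne n fun t => (1 - t) ^ s * A + t ^ s * B
  rw [integral_sub_pow, hG, integral_pow_mul_one_sub_rpow_add_rpow n hs] at h
  refine h.trans_eq ?_
  rw [div_eq_mul_one_div, hpq.mul_rpow_mul_mul_rpow (by positivity) (by positivity)
    (by have := betaF_nonneg (s + 1) (n + 1); have := betaF_nonneg 1 (n + s + 1); positivity),
    mul_assoc]

lemma abs_integral_pow_sub_mul_le {F : ℝ → ℝ} {a b s p q : ℝ} (hab : a < b) (n : ℕ) (hs : 0 < s)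
    (hpq : p.HolderConjugate q) (hF : IntervalIntegrable F volume a b)
    (hsc : sConvexOn s (Set.Icc a b) fun x => |F x| ^ q) :
    |∫ x in a..b, (b - x) ^ n * F x| ≤ (b - a) ^ (n + 1) * (1 / (n + 1)) ^ (1 / p) *
      (betaF (s + 1) (n + 1) * |F b| ^ q + betaF 1 (n + s + 1) * |F a| ^ q) ^ (1 / q) := by
  have hF' : IntervalIntegrable (fun x => F (a + b - x)) volume a b := by
    simpa using (hF.comp_sub_left (a + b)).symm
  have h := abs_integral_sub_pow_mul_le hab n hs hpq hF' hsc.comp_reflect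
  have hreflect := intervalIntegral.integral_comp_sub_left (a := a) (b := b)
    (fun x => (b - x) ^ n * F x) (a + b)
  simp only [add_sub_cancel_left, add_sub_cancel_right] at hreflect h
  rwa [← hreflect, intervalIntegral.integral_congr fun x _ => by
    rw [show b - (a + b - x) = x - a by ring]]

theorem stmt10_general (I : Set ℝ) (f : ℝ → ℝ) (n : ℕ) (a b : ℝ)
    (hab : a < b) (hsub : Set.Icc a b ⊆ interior I)
    (hdiff : ∀ k < n, DifferentiableOn ℝ (iteratedDeriv k f) (interior I))
    (hint : IntervalIntegrable (iteratedDeriv n f) volume a b)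
    (s : ℝ) (hs : s ∈ Set.Ioc (0:ℝ) 1) (p q : ℝ) (hq : 1 < q) (hp : p = q / (q - 1))
    (hsc : sConvexOn s (Set.Icc a b) (fun x => |iteratedDeriv n f x| ^ q)) :
    |(∑ m ∈ Finset.Icc 1 n, (-1:ℝ) ^ (n - m + 2) * ((b - a) ^ m / (m.factorial : ℝ)) * (iteratedDeriv (m - 1) f b - (-1:ℝ) ^ m * iteratedDeriv (m - 1) f a)) + 2 * (-1:ℝ) ^ n * (∫ x in a..b, f x)| ≤
      ((b - a) ^ (n + 1) / (n.factorial : ℝ)) * ((1 / ((n:ℝ) + 1)) ^ (1 / p)) *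
        ((betaF (s + 1) (n + 1) * |iteratedDeriv n f a| ^ q
            + betaF 1 (n + s + 1) * |iteratedDeriv n f b| ^ q) ^ (1 / q)
         + (betaF (s + 1) (n + 1) * |iteratedDeriv n f b| ^ q
            + betaF 1 (n + s + 1) * |iteratedDeriv n f a| ^ q) ^ (1 / q)) := by
  have hpq : p.HolderConjugate q := hp ▸ (Real.HolderConjugate.conjExponent hq).symm
  have hderiv : ∀ k < n, ∀ x ∈ Set.uIcc a b, DifferentiableAt ℝ (iteratedDeriv k f) x :=
    fun k hk x hx => (hdiff k hk).differentiableAt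
      (isOpen_interior.mem_nhds (hsub (Set.uIcc_of_le hab.le ▸ hx)))
  have hfac : (0:ℝ) < n.factorial := by positivity
  rw [← mul_le_mul_iff_of_pos_left hfac, ← abs_of_pos hfac, ← abs_mul,
    factorial_mul_sum_add_integral_eq n hderiv hint, abs_of_pos hfac]
  calc _ ≤ |∫ x in a..b, (x - a) ^ n * iteratedDeriv n f x|
        + |∫ x in a..b, (b - x) ^ n * iteratedDeriv n f x| := by
        refine (abs_add_le _ _).trans_eq ?_
        rw [abs_mul, abs_neg_one_pow, one_mul]
    _ ≤ _ := add_le_add (abs_integral_sub_pow_mul_le hab n hs.1 hpq hint hsc)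
        (abs_integral_pow_sub_mul_le hab n hs.1 hpq hint hsc)
    _ = _ := by field_simp

theorem stmt10 (I : Set ℝ) (f : ℝ → ℝ) (n : ℕ) (a b : ℝ)
    (hI : I ⊆ Set.Ici (0:ℝ)) (hab : a < b) (hsub : Set.Icc a b ⊆ interior I)
    (hdiff : ∀ k < n, DifferentiableOn ℝ (iteratedDeriv k f) (interior I))
    (hint : IntervalIntegrable (iteratedDeriv n f) volume a b)
    (s : ℝ) (hs : s ∈ Set.Ioc (0:ℝ) 1) (p q : ℝ) (hq : 1 < q) (hp : p = q / (q - 1))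
    (hsc : sConvexOn s (Set.Icc a b) (fun x => |iteratedDeriv n f x| ^ q)) :
    |(∑ m ∈ Finset.Icc 1 n, (-1:ℝ) ^ (n - m + 2) * ((b - a) ^ m / (m.factorial : ℝ)) * (iteratedDeriv (m - 1) f b - (-1:ℝ) ^ m * iteratedDeriv (m - 1) f a)) + 2 * (-1:ℝ) ^ n * (∫ x in a..b, f x)| ≤
      ((b - a) ^ (n + 1) / (n.factorial : ℝ)) * ((1 / ((n:ℝ) + 1)) ^ (1 / p)) *
        ((betaF (s + 1) (n + 1) * |iteratedDeriv n f a| ^ q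
            + betaF 1 (n + s + 1) * |iteratedDeriv n f b| ^ q) ^ (1 / q)
         + (betaF (s + 1) (n + 1) * |iteratedDeriv n f b| ^ q
            + betaF 1 (n + s + 1) * |iteratedDeriv n f a| ^ q) ^ (1 / q)) :=
  stmt10_general I f n a b hab hsub hdiff hint s hs p q hq hp hsc
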